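/- arXiv:2103.16884 — 4 statements merged into one kernel-verified Lean document; each statement's English description precedes it below -/
import Mathlib

section
/- Let n = N and let σ ∈ S_N be a permutation acting on ℂ^N by permuting coordinates, with cycle decomposition σ = σ₁⋯σ_p (including fixed points as 1-cycles). For J = exp(2πi/N)·Id and 1 ≤ k ≤ N−1, suppose for each cycle σ_a we write k·|σ_a| ≡ r_a + 1 (mod N) with 0 ≤ r_a ≤ N−2 and r_a + 1 = k|σ_a| − l_a N with 0 ≤ l_a < |σ_a|. Then age(σJ^k) = Σ_{a=1}^p ((|σ_a|−1)/2 + k|σ_a|/N − l_a). -/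
open Finset

/-- Age formula for `σJ^k`: with cycle lengths `m a` summing to `N` (prime),
`1 ≤ k ≤ N−1`, and `r a`, `l a` determined by `r a + 1 = k·(m a) − (l a)·N`,
`0 ≤ r a ≤ N−2`, `0 ≤ l a < m a`, the age (the sum of the fractional parts of
the eigenvalue exponents `q/(m a) + k/N`) equals
`Σ_a ((m a − 1)/2 + k·(m a)/N − l a)`. -/
theorem age_of_sigma_J_pow (N p : ℕ) (hN : N.Prime)
    (m : Fin p → ℕ) (hm : ∀ a, 1 ≤ m a) (hsum : ∑ a, m a = N)
    (k : ℕ) (hk : 1 ≤ k ∧ k ≤ N - 1)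
    (r l : Fin p → ℕ) (hr : ∀ a, r a ≤ N - 2) (hl : ∀ a, l a < m a)
    (hrl : ∀ a, (r a : ℤ) + 1 = (k : ℤ) * m a - (l a : ℤ) * N) :
    ∑ a, ∑ q ∈ Finset.Icc 1 (m a), Int.fract ((q : ℝ) / (m a) + (k : ℝ) / N)
      = ∑ a, (((m a : ℝ) - 1) / 2 + (k : ℝ) * (m a) / N - (l a : ℝ)) := by
  obtain ⟨hk1, hk2⟩ := hk
  have hN2 : 2 ≤ N := hN.two_le
  have hN0 : (0:ℝ) < N := by exact_mod_cast hN.pos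
  refine Finset.sum_congr rfl (fun a _ => ?_)
  set M := m a with hMdef
  have hM : 1 ≤ M := hm a
  have hM0 : (0:ℝ) < M := by exact_mod_cast hM
  have hla : l a < M := hl a
  have hra : r a ≤ N - 2 := hr a
  have hraZ : (r a : ℤ) + 1 ≤ (N : ℤ) - 1 := by omega
  have hrlZ : (r a : ℤ) + 1 = (k : ℤ) * M - (l a : ℤ) * N := hrl a
  have hkN : (k : ℤ) ≤ (N : ℤ) - 1 := by omega
  have key : ∀ q ∈ Finset.Icc 1 M,
      Int.fract ((q:ℝ)/M + (k:ℝ)/N)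
        = (q:ℝ)/M + (k:ℝ)/N - (if M - l a ≤ q then 1 else 0) := by
    intro q hq
    rw [Finset.mem_Icc] at hq
    obtain ⟨hq1, hq2⟩ := hq
    by_cases hcase : M - l a ≤ q
    · -- floor is 1
      have hge : (1:ℝ) ≤ (q:ℝ)/M + (k:ℝ)/N := by
        rw [div_add_div _ _ hM0.ne' hN0.ne', le_div_iff₀ (by positivity), one_mul]
        have hZ : (M:ℤ) * N ≤ q * N + M * k := by
          have hq' : (M:ℤ) - l a ≤ q := by omega
          nlinarith [hrlZ, hraZ, (by exact_mod_cast hN.pos : (0:ℤ) < (N:ℤ))]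
        exact_mod_cast hZ
      have hlt : (q:ℝ)/M + (k:ℝ)/N < 2 := by
        have h1 : (q:ℝ)/M ≤ 1 := by
          rw [div_le_one hM0]; exact_mod_cast hq2
        have h2 : (k:ℝ)/N < 1 := by
          rw [div_lt_one hN0]
          exact_mod_cast (by omega : k < N)
        linarith
      have hf : ⌊(q:ℝ)/M + (k:ℝ)/N⌋ = 1 := by
        rw [Int.floor_eq_iff]
        constructor
        · exact_mod_cast hge
        · push_cast; linarith
      rw [if_pos hcase, Int.fract, hf]
      norm_num
    · -- floor is 0, fract = self
      rw [if_neg hcase, Int.fract_eq_self.mpr ⟨by positivity, ?_⟩]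
      · ring
      · rw [div_add_div _ _ hM0.ne' hN0.ne', div_lt_one (by positivity)]
        have hZ : (q:ℤ) * N + M * k < M * N := by
          have hq' : (q:ℤ) ≤ (M:ℤ) - l a - 1 := by omega
          nlinarith [hrlZ, hraZ, (by exact_mod_cast hN.pos : (0:ℤ) < (N:ℤ))]
        exact_mod_cast hZ
  rw [Finset.sum_congr rfl key]
  have hgauss : ∑ q ∈ Finset.Icc 1 M, (q:ℝ) = M * (M + 1) / 2 := by
    have h1 : ∑ q ∈ Finset.Icc 1 M, q = ∑ q ∈ Finset.range (M+1), q := by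
      have hins : Finset.range (M+1) = insert 0 (Finset.Icc 1 M) := by
        ext x; simp [Finset.mem_range, Finset.mem_Icc]; omega
      rw [hins, Finset.sum_insert (by simp)]
      simp
    have h2 : (∑ q ∈ Finset.range (M+1), q) * 2 = (M+1) * M :=
      Finset.sum_range_id_mul_two (M+1)
    have h3 : (∑ q ∈ Finset.Icc 1 M, q) * 2 = M * (M+1) := by
      rw [h1, h2]; ring
    have h4 : ((∑ q ∈ Finset.Icc 1 M, q : ℕ) : ℝ) * 2 = (M:ℝ) * (M+1) := by
      exact_mod_cast congrArg (Nat.cast : ℕ → ℝ) h3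
    push_cast at h4 ⊢
    linarith
  have hind : ∑ q ∈ Finset.Icc 1 M, (if M - l a ≤ q then (1:ℝ) else 0) = l a + 1 := by
    rw [← Finset.sum_filter]
    have hfil : (Finset.Icc 1 M).filter (fun q => M - l a ≤ q) = Finset.Icc (M - l a) M := by
      ext q; simp [Finset.mem_filter, Finset.mem_Icc]; omega
    rw [hfil]
    simp [Nat.card_Icc]
    push_cast
    have : M + 1 - (M - l a) = l a + 1 := by omega
    rw [this]; push_cast; ring
  rw [Finset.sum_sub_distrib, Finset.sum_add_distrib, ← Finset.sum_div, hgauss, hind,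
    Finset.sum_const, Nat.card_Icc]
  have : M + 1 - 1 = M := by omega
  rw [this]
  have hMne : (M:ℝ) ≠ 0 := hM0.ne'
  have hNne : (N:ℝ) ≠ 0 := hN0.ne'
  field_simp
  linear_combination (2 * (M:ℝ) * k) * (mul_inv_cancel₀ hNne)
end

section
/- Let u, v ∈ S_N be commuting permutations acting on ℂ^N by permutation matrices, and let v|_{Fix(u)} denote the restriction of v to the fixed subspace of u (which v preserves). Then det(v|_{Fix(u)}) = (−1)^{dim Fix(u) − dim (Fix(u) ∩ Fix(v))}. -/
set_option linter.unusedSectionVars false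

open Equiv Module

/-- The linear action of a permutation `σ ∈ S_N` on `ℂ^N`. -/
noncomputable def permLin (N : ℕ) (σ : Equiv.Perm (Fin N)) :
    (Fin N → ℂ) →ₗ[ℂ] (Fin N → ℂ) :=
  Matrix.toLin' (σ.permMatrix ℂ)

/-- The fixed subspace `Fix(σ) = ker(σ − id)` of a permutation acting on `ℂ^N`. -/
noncomputable def fixSubmodule (N : ℕ) (σ : Equiv.Perm (Fin N)) :
    Submodule ℂ (Fin N → ℂ) :=
  LinearMap.ker (permLin N σ - LinearMap.id)

section General

variable {α : Type*} [Fintype α] [DecidableEq α]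

/-- The fixed subspace of the permutation action on functions. -/
noncomputable def fixSub (σ : Equiv.Perm α) : Submodule ℂ (α → ℂ) :=
  LinearMap.ker (LinearMap.funLeft ℂ ℂ ⇑σ - LinearMap.id)

lemma mem_fixSub {σ : Equiv.Perm α} {f : α → ℂ} :
    f ∈ fixSub σ ↔ ∀ x, f (σ x) = f x := by
  simp [fixSub, LinearMap.mem_ker, LinearMap.sub_apply, LinearMap.funLeft_apply,
    funext_iff, sub_eq_zero, Function.comp]

lemma fixSub_const {σ : Equiv.Perm α} {f : α → ℂ} (hf : f ∈ fixSub σ) {x y : α}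
    (hxy : σ.SameCycle x y) : f y = f x := by
  rw [mem_fixSub] at hf
  obtain ⟨i, rfl⟩ := hxy
  induction i using Int.induction_on generalizing x with
  | zero => simp
  | succ n ih =>
      have h1 : (σ ^ ((n : ℤ) + 1)) x = (σ ^ (n : ℤ)) (σ x) := by
        rw [zpow_add_one]; rfl
      rw [h1, ih, hf]
  | pred n ih =>
      have h1 : (σ ^ (-(n : ℤ) - 1)) x = (σ ^ (-(n : ℤ))) (σ⁻¹ x) := by
        rw [zpow_sub_one]; rfl
      have h2 : f (σ⁻¹ x) = f x := by
        have h3 := hf (σ⁻¹ x)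
        rw [show σ (σ⁻¹ x) = x from σ.apply_symm_apply x] at h3
        exact h3.symm
      rw [h1, ih, h2]

/-- The set of orbits. -/
abbrev OrbQ (σ : Equiv.Perm α) : Type _ := Quotient (Equiv.Perm.SameCycle.setoid σ)

instance (σ : Equiv.Perm α) : DecidableEq (OrbQ σ) :=
  fun a b => Quotient.recOnSubsingleton₂ a b fun x y =>
    decidable_of_iff (σ.SameCycle x y) (Quotient.eq (r := Equiv.Perm.SameCycle.setoid σ)).symm

noncomputable instance (σ : Equiv.Perm α) : Fintype (OrbQ σ) :=
  @Quotient.fintype α _ (Equiv.Perm.SameCycle.setoid σ)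
    (fun x y => (inferInstance : Decidable (σ.SameCycle x y)))

lemma mkQ_eq_iff {σ : Equiv.Perm α} {x y : α} :
    (Quotient.mk (Equiv.Perm.SameCycle.setoid σ) x
      = Quotient.mk (Equiv.Perm.SameCycle.setoid σ) y) ↔ σ.SameCycle x y :=
  Quotient.eq

lemma mkQ_apply_eq {σ : Equiv.Perm α} (x : α) :
    (Quotient.mk (Equiv.Perm.SameCycle.setoid σ) (σ x))
      = Quotient.mk (Equiv.Perm.SameCycle.setoid σ) x :=
  mkQ_eq_iff.2 ⟨-1, by simp⟩

/-- The pullback map along the quotient. -/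
noncomputable def Phi (σ : Equiv.Perm α) : (OrbQ σ → ℂ) →ₗ[ℂ] (α → ℂ) :=
  LinearMap.funLeft ℂ ℂ (Quotient.mk (Equiv.Perm.SameCycle.setoid σ))

lemma Phi_injective (σ : Equiv.Perm α) : Function.Injective (Phi σ) :=
  LinearMap.funLeft_injective_of_surjective ℂ ℂ _ (fun q => Quotient.exists_rep q)

lemma range_Phi (σ : Equiv.Perm α) : LinearMap.range (Phi σ) = fixSub σ := by
  ext f
  constructor
  · rintro ⟨g, rfl⟩
    rw [mem_fixSub]
    intro x
    show g (Quotient.mk _ (σ x)) = g (Quotient.mk _ x)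
    rw [mkQ_apply_eq]
  · intro hf
    refine ⟨Quotient.lift f (fun a b hab => (fixSub_const hf hab).symm), ?_⟩
    funext x
    rfl

/-- `fixSub σ` is isomorphic to functions on orbits. -/
noncomputable def fixEquiv (σ : Equiv.Perm α) : (OrbQ σ → ℂ) ≃ₗ[ℂ] fixSub σ :=
  (LinearEquiv.ofInjective (Phi σ) (Phi_injective σ)).trans (LinearEquiv.ofEq _ _ (range_Phi σ))

lemma fixEquiv_apply_coe (σ : Equiv.Perm α) (g : OrbQ σ → ℂ) (x : α) :
    ((fixEquiv σ g : α → ℂ)) x = g (Quotient.mk _ x) := rfl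

lemma finrank_fixSub (σ : Equiv.Perm α) :
    finrank ℂ (fixSub σ) = Fintype.card (OrbQ σ) := by
  rw [← LinearEquiv.finrank_eq (fixEquiv σ), finrank_pi]

/-- Classify orbits: fixed points plus cycle factors. -/
noncomputable def orbFun (σ : Equiv.Perm α) (x : α) :
    {x : α // σ x = x} ⊕ {c : Equiv.Perm α // c ∈ σ.cycleFactorsFinset} :=
  if h : σ x = x then Sum.inl ⟨x, h⟩
  else Sum.inr ⟨σ.cycleOf x,
    Equiv.Perm.cycleOf_mem_cycleFactorsFinset_iff.2 (Equiv.Perm.mem_support.2 h)⟩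

lemma orbFun_const {σ : Equiv.Perm α} {x y : α} (h : σ.SameCycle x y) :
    orbFun σ x = orbFun σ y := by
  by_cases hx : σ x = x
  · obtain ⟨i, rfl⟩ := h
    rw [Equiv.Perm.zpow_apply_eq_self_of_apply_eq_self hx]
  · have hy : ¬ σ y = y := by
      intro hy
      apply hx
      obtain ⟨i, hi⟩ := h.symm
      rw [Equiv.Perm.zpow_apply_eq_self_of_apply_eq_self hy i] at hi
      rw [← hi]; exact hy
    rw [orbFun, orbFun, dif_neg hx, dif_neg hy]
    exact congrArg _ (Subtype.ext (Equiv.Perm.SameCycle.cycleOf_eq h))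

noncomputable def orbSum (σ : Equiv.Perm α) :
    OrbQ σ ≃ ({x : α // σ x = x} ⊕ {c : Equiv.Perm α // c ∈ σ.cycleFactorsFinset}) := by
  refine Equiv.ofBijective (Quotient.lift (orbFun σ) (fun a b h => orbFun_const h)) ⟨?_, ?_⟩
  · intro q1 q2
    refine Quotient.inductionOn₂ q1 q2 (fun x y hxy => ?_)
    simp only [Quotient.lift_mk] at hxy
    by_cases hx : σ x = x <;> by_cases hy : σ y = y
    · rw [orbFun, orbFun, dif_pos hx, dif_pos hy] at hxy
      simp only [Sum.inl.injEq, Subtype.mk.injEq] at hxy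
      exact Quotient.sound (hxy ▸ Equiv.Perm.SameCycle.refl σ x)
    · rw [orbFun, orbFun, dif_pos hx, dif_neg hy] at hxy
      exact absurd hxy (by simp)
    · rw [orbFun, orbFun, dif_neg hx, dif_pos hy] at hxy
      exact absurd hxy (by simp)
    · rw [orbFun, orbFun, dif_neg hx, dif_neg hy] at hxy
      simp only [Sum.inr.injEq, Subtype.mk.injEq] at hxy
      have hmem : y ∈ (σ.cycleOf x).support := by
        rw [hxy, Equiv.Perm.mem_support_cycleOf_iff]
        exact ⟨Equiv.Perm.SameCycle.refl σ y, Equiv.Perm.mem_support.2 hy⟩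
      exact Quotient.sound ((Equiv.Perm.mem_support_cycleOf_iff.1 hmem).1)
  · rintro (⟨x, hx⟩ | ⟨c, hc⟩)
    · refine ⟨Quotient.mk _ x, ?_⟩
      simp only [Quotient.lift_mk, orbFun, dif_pos hx]
    · obtain ⟨x, hx1, -⟩ := (Equiv.Perm.mem_cycleFactorsFinset_iff.1 hc).1
      have hxc : x ∈ c.support := Equiv.Perm.mem_support.2 hx1
      have hxσ : x ∈ σ.support := Equiv.Perm.mem_cycleFactorsFinset_support_le hc hxc
      have hcx : c = σ.cycleOf x := Equiv.Perm.cycle_is_cycleOf hxc hc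
      refine ⟨Quotient.mk _ x, ?_⟩
      have hσx : ¬ σ x = x := Equiv.Perm.mem_support.1 hxσ
      simp only [Quotient.lift_mk, orbFun, dif_neg hσx, Sum.inr.injEq, Subtype.mk.injEq]
      exact hcx.symm

lemma card_orbQ (σ : Equiv.Perm α) :
    Fintype.card (OrbQ σ) = Fintype.card {x : α // σ x = x} + σ.cycleFactorsFinset.card := by
  rw [Fintype.card_congr (orbSum σ), Fintype.card_sum]
  congr 1
  exact Fintype.card_coe _

lemma card_fixed_add (σ : Equiv.Perm α) :
    Fintype.card α = Fintype.card {x : α // σ x = x} + σ.cycleType.sum := by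
  rw [Equiv.Perm.sum_cycleType]
  have h1 : σ.support.card = Fintype.card {x : α // ¬ σ x = x} := by
    rw [Fintype.card_subtype]
    congr 1
  rw [h1, Fintype.card_subtype, Fintype.card_subtype]
  have h2 := Finset.card_filter_add_card_filter_not
    (s := (Finset.univ : Finset α)) (p := fun x => σ x = x)
  rw [← Finset.card_univ]
  exact h2.symm

lemma card_cycleType (σ : Equiv.Perm α) :
    Multiset.card σ.cycleType = σ.cycleFactorsFinset.card := by
  simp [Equiv.Perm.cycleType]

lemma sign_eq_orb (σ : Equiv.Perm α) :
    ((Equiv.Perm.sign σ : ℤ) : ℂ)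
      = (-1) ^ (Fintype.card α - Fintype.card (OrbQ σ)) := by
  have hle : Multiset.card σ.cycleType ≤ σ.cycleType.sum := by
    have h0 := Multiset.card_nsmul_le_sum (s := σ.cycleType) (a := 1)
      (fun x hx => le_trans one_le_two (Equiv.Perm.two_le_of_mem_cycleType hx))
    simpa using h0
  have hexp : Fintype.card α - Fintype.card (OrbQ σ)
      = σ.cycleType.sum - Multiset.card σ.cycleType := by
    rw [card_orbQ σ, card_fixed_add σ, ← card_cycleType σ]
    omega
  rw [hexp, Equiv.Perm.sign_of_cycleType]
  have h2 : σ.cycleType.sum + Multiset.card σ.cycleType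
      = (σ.cycleType.sum - Multiset.card σ.cycleType) + 2 * Multiset.card σ.cycleType := by
    omega
  rw [h2]
  push_cast
  rw [pow_add, pow_mul]
  norm_num

end General

section Main

variable {α : Type*} [Fintype α] [DecidableEq α]

theorem det_restrict_fixSub (u v : Equiv.Perm α) (huv : u * v = v * u)
    (h : ∀ x ∈ fixSub u, LinearMap.funLeft ℂ ℂ ⇑v x ∈ fixSub u) :
    LinearMap.det ((LinearMap.funLeft ℂ ℂ ⇑v).restrict h)
      = (-1 : ℂ) ^ (finrank ℂ (fixSub u) - finrank ℂ ↥(fixSub u ⊓ fixSub v)) := by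
  have hcomm : ∀ (i : ℤ) (x : α), (u ^ i) (v x) = v ((u ^ i) x) := by
    intro i x
    have hc : u ^ i * v = v * u ^ i := (Commute.zpow_left (huv : Commute u v) i)
    calc (u ^ i) (v x) = (u ^ i * v) x := rfl
      _ = (v * u ^ i) x := by rw [hc]
      _ = v ((u ^ i) x) := rfl
  have hrel : ∀ x y : α, u.SameCycle x y ↔ u.SameCycle (v x) (v y) := by
    intro x y
    constructor
    · rintro ⟨i, rfl⟩
      exact ⟨i, hcomm i x⟩
    · rintro ⟨i, hi⟩
      exact ⟨i, v.injective (by rw [← hcomm i x, hi])⟩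
  let τ : Equiv.Perm (OrbQ u) := Quotient.congr (v : α ≃ α) hrel
  have hτ : ∀ x : α,
      Quotient.mk (Equiv.Perm.SameCycle.setoid u) (v x)
        = τ (Quotient.mk (Equiv.Perm.SameCycle.setoid u) x) := fun x => rfl
  -- the basis of fixSub u indexed by orbits
  let B : Basis (OrbQ u) ℂ (fixSub u) := (Pi.basisFun ℂ (OrbQ u)).map (fixEquiv u)
  have hBval : ∀ (q : OrbQ u) (x : α),
      ((B q : α → ℂ)) x = if Quotient.mk (Equiv.Perm.SameCycle.setoid u) x = q then 1 else 0 := by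
    intro q x
    show ((fixEquiv u (Pi.basisFun ℂ (OrbQ u) q) : α → ℂ)) x = _
    rw [fixEquiv_apply_coe]
    rw [Pi.basisFun_apply]
    simp [Pi.single_apply]
  have himg : ∀ q, (LinearMap.funLeft ℂ ℂ ⇑v).restrict h (B q) = B (τ⁻¹ q) := by
    intro q
    apply Subtype.ext
    funext x
    have lhs : (((LinearMap.funLeft ℂ ℂ ⇑v).restrict h (B q) : α → ℂ)) x = (B q : α → ℂ) (v x) := rfl
    rw [lhs, hBval, hBval, hτ x]
    congr 1
    rw [eq_iff_iff]
    constructor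
    · intro h1; rw [← h1]; exact (Equiv.symm_apply_apply τ _).symm
    · intro h1; rw [h1]; exact Equiv.apply_symm_apply τ q
  have hmat : LinearMap.toMatrix B B ((LinearMap.funLeft ℂ ℂ ⇑v).restrict h)
      = Equiv.Perm.permMatrix ℂ τ := by
    ext i j
    have hperm : Equiv.Perm.permMatrix ℂ τ i j = if τ⁻¹ j = i then (1 : ℂ) else 0 := by
      simp only [Equiv.Perm.permMatrix, PEquiv.toMatrix_apply, Equiv.toPEquiv_apply,
        Option.mem_def, Option.some.injEq]
      congr 1
      rw [eq_iff_iff]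
      constructor
      · intro h1; rw [← h1]; exact Equiv.symm_apply_apply τ i
      · intro h1; rw [← h1]; exact Equiv.apply_symm_apply τ j
    rw [LinearMap.toMatrix_apply, himg j, Basis.repr_self, Finsupp.single_apply, hperm]
  have hdet : LinearMap.det ((LinearMap.funLeft ℂ ℂ ⇑v).restrict h)
      = ((Equiv.Perm.sign τ : ℤ) : ℂ) := by
    rw [← LinearMap.det_toMatrix B, hmat, Matrix.det_permutation]
  -- the intersection
  have hmap : Submodule.map (Phi u) (fixSub τ) = fixSub u ⊓ fixSub v := by
    apply le_antisymm
    · rintro f ⟨g, hg, rfl⟩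
      constructor
      · rw [← range_Phi u]
        exact ⟨g, rfl⟩
      · rw [SetLike.mem_coe, mem_fixSub]
        intro x
        show g (Quotient.mk _ (v x)) = g (Quotient.mk _ x)
        rw [hτ x]
        exact mem_fixSub.1 hg _
    · rintro f ⟨hfu, hfv⟩
      rw [← range_Phi u] at hfu
      obtain ⟨g, rfl⟩ := hfu
      refine ⟨g, ?_, rfl⟩
      rw [SetLike.mem_coe, mem_fixSub]
      intro q
      refine Quotient.inductionOn q (fun x => ?_)
      show g (τ (Quotient.mk _ x)) = g (Quotient.mk _ x)
      rw [← hτ x]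
      exact mem_fixSub.1 hfv x
  have h2 : finrank ℂ ↥(fixSub u ⊓ fixSub v) = Fintype.card (OrbQ τ) := by
    rw [← hmap,
      ← LinearEquiv.finrank_eq (Submodule.equivMapOfInjective _ (Phi_injective u) (fixSub τ))]
    exact finrank_fixSub τ
  rw [hdet, finrank_fixSub u, h2, sign_eq_orb τ]

end Main

lemma permLin_eq (N : ℕ) (σ : Equiv.Perm (Fin N)) :
    permLin N σ = LinearMap.funLeft ℂ ℂ ⇑σ := by
  refine LinearMap.ext fun f => ?_
  show Matrix.toLin' (σ.permMatrix ℂ) f = f ∘ ⇑σ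
  ext i
  simp [Matrix.toLin'_apply, Matrix.mulVec, dotProduct, Equiv.Perm.permMatrix,
    PEquiv.toMatrix, Equiv.toPEquiv, Option.mem_def, Function.comp]

lemma fixSubmodule_eq (N : ℕ) (σ : Equiv.Perm (Fin N)) :
    fixSubmodule N σ = fixSub σ := by
  rw [fixSubmodule, fixSub, permLin_eq]

lemma det_restrict_congr {M : Type*} [AddCommGroup M] [Module ℂ M]
    {f g : M →ₗ[ℂ] M} {p q : Submodule ℂ M}
    (hfg : f = g) (hpq : p = q) (hf : ∀ x ∈ p, f x ∈ p) (hg : ∀ x ∈ q, g x ∈ q) :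
    LinearMap.det (f.restrict hf) = LinearMap.det (g.restrict hg) := by
  subst hfg
  subst hpq
  rfl

/-- For commuting permutations `u, v` on `ℂ^N`,
`det(v|_{Fix(u)}) = (−1)^{dim Fix(u) − dim(Fix(u) ∩ Fix(v))}`. -/
theorem det_restrict_fix (N : ℕ) (u v : Equiv.Perm (Fin N)) (huv : u * v = v * u)
    (h : ∀ x ∈ fixSubmodule N u, permLin N v x ∈ fixSubmodule N u) :
    LinearMap.det ((permLin N v).restrict h)
      = (-1 : ℂ) ^ (Module.finrank ℂ (fixSubmodule N u)
          - Module.finrank ℂ ↥(fixSubmodule N u ⊓ fixSubmodule N v)) := by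
  have h' : ∀ x ∈ fixSub u, LinearMap.funLeft ℂ ℂ ⇑v x ∈ fixSub u := by
    intro x hx
    rw [← fixSubmodule_eq] at hx ⊢
    rw [← permLin_eq]
    exact h x hx
  rw [det_restrict_congr (permLin_eq N v) (fixSubmodule_eq N u) h h',
    fixSubmodule_eq N u, fixSubmodule_eq N v]
  exact det_restrict_fixSub u v huv h'
end

section
/- Let N be prime, ζ = exp(2πi/N), σ ∈ S_N a permutation and q an integer with 1 ≤ q ≤ N−1. If the permutation matrix of σ composed with the scalar ζ^q has a nonzero fixed vector in ℂ^N, then σ is an N-cycle. -/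
/-- Let `N` be prime, `ζ = exp(2πi/N)` and `1 ≤ q ≤ N−1`.  If the map
`x ↦ ζ^q·(σ·x)` on `ℂ^N` has a nonzero fixed vector, then `σ` is an `N`-cycle. -/
theorem nonzero_fixed_implies_N_cycle (N : ℕ) (hN : N.Prime)
    (σ : Equiv.Perm (Fin N)) (q : ℕ) (hq : 1 ≤ q ∧ q ≤ N - 1)
    (v : Fin N → ℂ) (hv : v ≠ 0)
    (hfix : ∀ i, Complex.exp (2 * Real.pi * Complex.I / N) ^ q * v (σ⁻¹ i) = v i) :
    σ.IsCycle ∧ σ.support.card = N := by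
  set ζ : ℂ := Complex.exp (2 * Real.pi * Complex.I / N) with hζdef
  have hNpos : 0 < N := hN.pos
  have hζ : IsPrimitiveRoot ζ N := Complex.isPrimitiveRoot_exp N hNpos.ne'
  -- basic step
  have hstep : ∀ j, v (σ j) = ζ ^ q * v j := by
    intro j
    have := hfix (σ j)
    rw [← Equiv.Perm.mul_apply, inv_mul_cancel, Equiv.Perm.one_apply] at this
    exact this.symm
  have hiter : ∀ (k : ℕ) (j : Fin N), v ((σ ^ k) j) = ζ ^ (q * k) * v j := by
    intro k
    induction k with
    | zero => intro j; simp
    | succ k ih =>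
      intro j
      have : (σ ^ (k + 1)) j = σ ((σ ^ k) j) := by
        rw [pow_succ' σ k, Equiv.Perm.mul_apply]
      rw [this, hstep, ih, ← mul_assoc, ← pow_add]
      ring_nf
  -- pick a coordinate where v is nonzero
  obtain ⟨i, hvi⟩ : ∃ i, v i ≠ 0 := Function.ne_iff.mp hv
  -- periodicity
  have hper : i ∈ Function.periodicPts ⇑σ := by
    refine ⟨orderOf σ, orderOf_pos σ, ?_⟩
    show (⇑σ)^[orderOf σ] i = i
    rw [Equiv.Perm.iterate_eq_pow, pow_orderOf_eq_one]; rfl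
  set L := Function.minimalPeriod ⇑σ i with hLdef
  have hLpos : 0 < L := Function.minimalPeriod_pos_of_mem_periodicPts hper
  have hLfix : (σ ^ L) i = i := by
    rw [← Equiv.Perm.iterate_eq_pow]; exact Function.iterate_minimalPeriod
  -- ζ^(qL) = 1
  have hpow : ζ ^ (q * L) = 1 := by
    have := hiter L i
    rw [hLfix] at this
    have h2 : (ζ ^ (q * L) - 1) * v i = 0 := by rw [sub_mul, one_mul, ← this, sub_self]
    rcases mul_eq_zero.mp h2 with h | h
    · exact sub_eq_zero.mp h
    · exact absurd h hvi
  have hdvd : N ∣ q * L := hζ.dvd_of_pow_eq_one _ hpow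
  have hNL : N ∣ L := by
    rcases (Nat.Prime.dvd_mul hN).mp hdvd with h | h
    · exact absurd h (Nat.not_dvd_of_pos_of_lt hq.1 (by omega))
    · exact h
  -- L ≤ N
  have hLle : L ≤ N := by
    have hinj : Function.Injective (fun k : Fin L => (⇑σ)^[(k : ℕ)] i) := by
      intro a b hab
      have := (Function.iterate_eq_iterate_iff_of_lt_minimalPeriod
        (by exact a.2) (by exact b.2)).mp hab
      exact Fin.ext this
    simpa using Fintype.card_le_of_injective _ hinj
  have hLN : L = N := le_antisymm hLle (Nat.le_of_dvd hLpos hNL)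
  -- every point is in the orbit of i
  have hsurj : Function.Surjective (fun k : Fin N => (⇑σ)^[(k : ℕ)] i) := by
    have hinj : Function.Injective (fun k : Fin N => (⇑σ)^[(k : ℕ)] i) := by
      intro a b hab
      have := (Function.iterate_eq_iterate_iff_of_lt_minimalPeriod
        (by rw [← hLdef, hLN]; exact a.2) (by rw [← hLdef, hLN]; exact b.2)).mp hab
      exact Fin.ext this
    exact Finite.surjective_of_injective hinj
  -- no fixed points
  have hnofix : ∀ j, σ j ≠ j := by
    intro j hj
    obtain ⟨k, hk⟩ := hsurj j
    have h1 : Function.minimalPeriod ⇑σ j = N := by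
      rw [← hk, Function.minimalPeriod_apply_iterate hper, ← hLdef, hLN]
    have : Function.minimalPeriod ⇑σ j = 1 :=
      Function.minimalPeriod_eq_one_iff_isFixedPt.mpr hj
    rw [h1] at this
    exact hN.one_lt.ne' this
  have hσi : σ i ≠ i := hnofix i
  constructor
  · refine ⟨i, hσi, fun j _ => ?_⟩
    obtain ⟨k, hk⟩ := hsurj j
    exact ⟨(k : ℕ), by rw [zpow_natCast, ← Equiv.Perm.iterate_eq_pow]; exact hk⟩
  · have : σ.support = Finset.univ := by
      ext j; simp [Equiv.Perm.mem_support, hnofix j]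
    rw [this, Finset.card_univ, Fintype.card_fin]
end

section
/- Let N = n be prime, u = ∏_{a=1}^p σ_a g_a ∈ S_N ⋉ (ℤ/N)^N a generalized cycle decomposition with each g_a = t_{i_a}^{d_a}, 1 ≤ d_a ≤ N−1 (all cycles non-special). Set X = ξ_u. Then the charges q_l(X) = (N−p)/2 + Σ_a d_a/N − 1 and q_r(X) = (N+p)/2 − Σ_a d_a/N − 1, and for Y = ∏_a ⌊x̃_{i_a}^{d_a−1}⌋ ξ_{σ_a} the charges satisfy q_l(Y) = q_r(Y) = Σ_a d_a/N − 1 + (N−p)/2. Hence q_l(X) = q_l(Y) and q_r(X) = N − 2 − q_r(Y). -/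
open Finset

lemma gauss_icc (n : ℕ) : ∑ q ∈ Finset.Icc 1 n, (q : ℝ) = n * (n + 1) / 2 := by
  induction n with
  | zero => simp
  | succ k ih =>
    rw [Finset.sum_Icc_succ_top (by omega), ih]
    push_cast; ring

lemma inner_sums (N M D : ℕ) (hM : 1 ≤ M) (hD1 : 1 ≤ D) (hDN : D < N) :
    (∑ q ∈ Finset.Icc 1 M, Int.fract ((q : ℝ) / M + (D : ℝ) / ((N : ℝ) * M))
      = ((M : ℝ) - 1) / 2 + (D : ℝ) / N)
    ∧ (∑ q ∈ Finset.Icc 1 M, Int.fract (-((q : ℝ) / M + (D : ℝ) / ((N : ℝ) * M)))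
      = ((M : ℝ) + 1) / 2 - (D : ℝ) / N) := by
  have hN0 : (0 : ℝ) < N := by
    have : 0 < N := by omega
    exact_mod_cast this
  have hM0 : (0 : ℝ) < M := by exact_mod_cast hM
  have hy0 : (0 : ℝ) < (D : ℝ) / ((N : ℝ) * M) := by positivity
  have hyM : (D : ℝ) / ((N : ℝ) * M) < 1 / M := by
    rw [div_lt_div_iff₀ (by positivity) hM0]
    have hDN' : (D : ℝ) < N := by exact_mod_cast hDN
    nlinarith
  have hy1 : (D : ℝ) / ((N : ℝ) * M) < 1 := by
    have h1 : (1 : ℝ) / M ≤ 1 := by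
      rw [div_le_one hM0]; exact_mod_cast hM
    linarith
  have key : ∀ q ∈ Finset.Icc 1 M,
      Int.fract ((q : ℝ) / M + (D : ℝ) / ((N : ℝ) * M))
      = if q = M then (D : ℝ) / ((N : ℝ) * M) else (q : ℝ) / M + (D : ℝ) / ((N : ℝ) * M) := by
    intro q hq
    simp only [Finset.mem_Icc] at hq
    by_cases h : q = M
    · subst h
      simp only [if_pos rfl]
      have h1 : (q : ℝ) / q = 1 := div_self (ne_of_gt hM0)
      rw [h1, add_comm]
      rw [show (1 : ℝ) = ((1 : ℤ) : ℝ) by norm_num, Int.fract_add_intCast]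
      exact Int.fract_eq_self.mpr ⟨le_of_lt hy0, hy1⟩
    · simp only [if_neg h]
      refine Int.fract_eq_self.mpr ⟨by positivity, ?_⟩
      have hq' : (q : ℝ) ≤ (M : ℝ) - 1 := by
        have : q + 1 ≤ M := by omega
        have := (Nat.cast_le (α := ℝ)).mpr this
        push_cast at this; linarith
      have h3 : (q : ℝ) / M + (D : ℝ) / ((N : ℝ) * M)
          < ((M : ℝ) - 1) / M + 1 / M :=
        add_lt_add_of_le_of_lt (by gcongr) hyM
      have h4 : ((M : ℝ) - 1) / M + 1 / M = 1 := by field_simp; ring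
      linarith
  have keypos : ∀ q ∈ Finset.Icc 1 M,
      Int.fract ((q : ℝ) / M + (D : ℝ) / ((N : ℝ) * M)) ≠ 0 := by
    intro q hq
    rw [key q hq]
    split
    · exact ne_of_gt hy0
    · have : 0 < (q : ℝ) / M + (D : ℝ) / ((N : ℝ) * M) := by
        simp only [Finset.mem_Icc] at hq
        have : 0 < (q : ℝ) := by exact_mod_cast hq.1
        positivity
      exact ne_of_gt this
  obtain ⟨M', rfl⟩ : ∃ M', M = M' + 1 := ⟨M - 1, by omega⟩
  have hsum1 : ∑ q ∈ Finset.Icc 1 (M' + 1),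
      Int.fract ((q : ℝ) / (M' + 1 : ℕ) + (D : ℝ) / ((N : ℝ) * (M' + 1 : ℕ)))
      = (((M' + 1 : ℕ) : ℝ) - 1) / 2 + (D : ℝ) / N := by
    rw [Finset.sum_congr rfl key]
    rw [Finset.sum_Icc_succ_top (by omega)]
    have hne : ∀ q ∈ Finset.Icc 1 M', (if q = M' + 1 then (D : ℝ) / ((N : ℝ) * (M' + 1 : ℕ))
        else (q : ℝ) / ((M' + 1 : ℕ) : ℝ) + (D : ℝ) / ((N : ℝ) * (M' + 1 : ℕ)))
        = (q : ℝ) / ((M' + 1 : ℕ) : ℝ) + (D : ℝ) / ((N : ℝ) * (M' + 1 : ℕ)) := by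
      intro q hq
      simp only [Finset.mem_Icc] at hq
      rw [if_neg (by omega)]
    rw [Finset.sum_congr rfl hne, if_pos rfl, Finset.sum_add_distrib, ← Finset.sum_div,
      gauss_icc, Finset.sum_const, Nat.card_Icc]
    push_cast
    simp only [nsmul_eq_mul]
    field_simp
    ring
  refine ⟨hsum1, ?_⟩
  have : ∑ q ∈ Finset.Icc 1 (M' + 1),
      Int.fract (-((q : ℝ) / (M' + 1 : ℕ) + (D : ℝ) / ((N : ℝ) * (M' + 1 : ℕ))))
      = ∑ q ∈ Finset.Icc 1 (M' + 1),
        (1 - Int.fract ((q : ℝ) / (M' + 1 : ℕ) + (D : ℝ) / ((N : ℝ) * (M' + 1 : ℕ)))) := by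
    refine Finset.sum_congr rfl fun q hq => ?_
    exact Int.fract_neg (keypos q hq)
  rw [this, Finset.sum_sub_distrib, hsum1, Finset.sum_const, Nat.card_Icc]
  push_cast
  ring

/-- Charges under the mirror map: for `N = n` prime and
`u = ∏ σ_a t_{i_a}^{d_a}` with all generalized cycles non-special
(`1 ≤ d_a ≤ N−1`), the narrow element `X = ξ_u` has
`q_l(X) = (N−p)/2 + Σ d_a/N − 1` and `q_r(X) = (N+p)/2 − Σ d_a/N − 1`
(charges `−1 + age(u^{±1})`, ages being sums of fractional parts of the
eigenvalue exponents `±(q/(m a) + d_a/(N·m a))`), while the broad element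
`Y = ∏ ⌊x̃^{d_a−1}⌋ξ_{σ_a}` has
`q_l(Y) = q_r(Y) = (Σ(d_a−1) − (N−p))/N + Σ(m_a−1)/2 = Σ d_a/N − 1 + (N−p)/2`.
Hence `q_l(X) = q_l(Y)` and `q_r(X) = N − 2 − q_r(Y)`. -/
theorem charges_mirror_map (N p : ℕ) (hN : N.Prime)
    (m : Fin p → ℕ) (hm : ∀ a, 1 ≤ m a) (hsum : ∑ a, m a = N)
    (d : Fin p → ℕ) (hd : ∀ a, 1 ≤ d a ∧ d a ≤ N - 1) :
    ((-1 : ℝ) + ∑ a, ∑ q ∈ Finset.Icc 1 (m a),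
          Int.fract ((q : ℝ) / (m a) + (d a : ℝ) / ((N : ℝ) * (m a)))
        = ((N : ℝ) - p) / 2 + (∑ a, (d a : ℝ)) / N - 1)
    ∧ ((-1 : ℝ) + ∑ a, ∑ q ∈ Finset.Icc 1 (m a),
          Int.fract (-((q : ℝ) / (m a) + (d a : ℝ) / ((N : ℝ) * (m a))))
        = ((N : ℝ) + p) / 2 - (∑ a, (d a : ℝ)) / N - 1)
    ∧ (((∑ a, ((d a : ℝ) - 1)) - ((N : ℝ) - p)) / N + ∑ a, ((m a : ℝ) - 1) / 2
        = (∑ a, (d a : ℝ)) / N - 1 + ((N : ℝ) - p) / 2)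
    ∧ ((-1 : ℝ) + ∑ a, ∑ q ∈ Finset.Icc 1 (m a),
          Int.fract ((q : ℝ) / (m a) + (d a : ℝ) / ((N : ℝ) * (m a)))
        = ((∑ a, ((d a : ℝ) - 1)) - ((N : ℝ) - p)) / N + ∑ a, ((m a : ℝ) - 1) / 2)
    ∧ ((-1 : ℝ) + ∑ a, ∑ q ∈ Finset.Icc 1 (m a),
          Int.fract (-((q : ℝ) / (m a) + (d a : ℝ) / ((N : ℝ) * (m a))))
        = (N : ℝ) - 2
          - (((∑ a, ((d a : ℝ) - 1)) - ((N : ℝ) - p)) / N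
              + ∑ a, ((m a : ℝ) - 1) / 2)) := by
  have hN2 := hN.two_le
  have hda : ∀ a, d a < N := fun a => by have := (hd a).2; omega
  have hN0 : (0 : ℝ) < N := by
    have : 0 < N := by omega
    exact_mod_cast this
  have L : ∑ a, ∑ q ∈ Finset.Icc 1 (m a),
        Int.fract ((q : ℝ) / (m a) + (d a : ℝ) / ((N : ℝ) * (m a)))
      = ∑ a, (((m a : ℝ) - 1) / 2 + (d a : ℝ) / N) :=
    Finset.sum_congr rfl fun a _ =>
      (inner_sums N (m a) (d a) (hm a) (hd a).1 (hda a)).1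
  have R : ∑ a, ∑ q ∈ Finset.Icc 1 (m a),
        Int.fract (-((q : ℝ) / (m a) + (d a : ℝ) / ((N : ℝ) * (m a))))
      = ∑ a, (((m a : ℝ) + 1) / 2 - (d a : ℝ) / N) :=
    Finset.sum_congr rfl fun a _ =>
      (inner_sums N (m a) (d a) (hm a) (hd a).1 (hda a)).2
  have hmr : (∑ a, (m a : ℝ)) = N := by exact_mod_cast hsum
  have e1 : ∑ a, (((m a : ℝ) - 1) / 2 + (d a : ℝ) / N)
      = ((N : ℝ) - p) / 2 + (∑ a, (d a : ℝ)) / N := by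
    rw [Finset.sum_add_distrib, ← Finset.sum_div, ← Finset.sum_div,
      Finset.sum_sub_distrib, Finset.sum_const, hmr]
    simp [Finset.card_univ]
  have e2 : ∑ a, (((m a : ℝ) + 1) / 2 - (d a : ℝ) / N)
      = ((N : ℝ) + p) / 2 - (∑ a, (d a : ℝ)) / N := by
    rw [Finset.sum_sub_distrib, ← Finset.sum_div, ← Finset.sum_div,
      Finset.sum_add_distrib, Finset.sum_const, hmr]
    simp [Finset.card_univ]
  have e3 : ∑ a, ((d a : ℝ) - 1) = (∑ a, (d a : ℝ)) - p := by
    rw [Finset.sum_sub_distrib, Finset.sum_const]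
    simp [Finset.card_univ]
  have e4 : ∑ a, ((m a : ℝ) - 1) / 2 = ((N : ℝ) - p) / 2 := by
    rw [← Finset.sum_div, Finset.sum_sub_distrib, Finset.sum_const, hmr]
    simp [Finset.card_univ]
  refine ⟨by rw [L, e1]; ring, by rw [R, e2]; ring, ?_, ?_, ?_⟩
  · rw [e3, e4]; field_simp; ring
  · rw [L, e1, e3, e4]; field_simp; ring
  · rw [R, e2, e3, e4]; field_simp; ring
end
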